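/- Let A and B be k×k symmetric positive semidefinite real matrices with B positive definite. Then ‖A^{1/2} − B^{1/2}‖ ≤ ‖A − B‖ · ‖B^{-1}‖^{1/2}, where ‖·‖ denotes the operator norm. -/

import Mathlib

open scoped Matrix.Norms.L2Operator

open scoped ComplexOrder in
/-- The positive semidefinite square root of a positive semidefinite matrix, as defined in the
older Mathlib (removed since). -/
noncomputable def Matrix.PosSemidef.sqrt {n 𝕜 : Type*} [Fintype n] [DecidableEq n] [RCLike 𝕜]
    {A : Matrix n n 𝕜} (hA : A.PosSemidef) : Matrix n n 𝕜 :=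
  hA.1.eigenvectorUnitary.1 * Matrix.diagonal ((↑) ∘ (√·) ∘ hA.1.eigenvalues) *
  (star hA.1.eigenvectorUnitary : Matrix n n 𝕜)

/-!
Write `P = A^{1/2}`, `Q = B^{1/2}` and `S = P - Q`, so that `A - B = P S + S Q`. The operator
norm of the Hermitian matrix `S` is the largest `|μ|` over its eigenvalues `μ`. For a unit
eigenvector `v` with `S v = μ v`, the quadratic form of `A - B` at `v` equals
`μ (⟪v, P v⟫ + ⟪v, Q v⟫)`, hence `|μ| ⟪v, Q v⟫ ≤ ‖A - B‖`. Finally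
`⟪v, Q v⟫ = ‖Q^{1/2} v‖² ≥ ‖Q^{-1/2}‖⁻² = ‖Q⁻¹‖⁻¹`, and the C*-identity gives
`‖Q⁻¹‖ = ‖B⁻¹‖^{1/2}`.
-/
open scoped ComplexOrder

namespace Matrix

variable {n 𝕜 : Type*} [Fintype n] [RCLike 𝕜]

lemma star_dotProduct_conjTranspose_mul_self_mulVec (R : Matrix n n 𝕜)
    (x : EuclideanSpace 𝕜 n) :
    star ⇑x ⬝ᵥ ((Rᴴ * R) *ᵥ ⇑x) = ‖(EuclideanSpace.equiv n 𝕜).symm (R *ᵥ x)‖ ^ 2 := by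
  rw [← mulVec_mulVec, dotProduct_mulVec, ← star_mulVec, ← inner_self_eq_norm_sq_to_K,
    EuclideanSpace.inner_eq_star_dotProduct, dotProduct_comm]
  rfl

variable [DecidableEq n]

lemma norm_star_dotProduct_mulVec_le (M : Matrix n n 𝕜) (x : EuclideanSpace 𝕜 n) :
    ‖star ⇑x ⬝ᵥ (M *ᵥ ⇑x)‖ ≤ ‖M‖ * ‖x‖ ^ 2 := by
  rw [dotProduct_comm]
  calc ‖M *ᵥ ⇑x ⬝ᵥ star ⇑x‖
        = ‖inner 𝕜 x ((EuclideanSpace.equiv n 𝕜).symm (M *ᵥ x))‖ := by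
        rw [EuclideanSpace.inner_eq_star_dotProduct]; rfl
    _ ≤ ‖x‖ * (‖M‖ * ‖x‖) := by
        grw [norm_inner_le_norm, l2_opNorm_mulVec]
    _ = ‖M‖ * ‖x‖ ^ 2 := by ring

lemma norm_le_norm_inv_mul_norm_mulVec {R : Matrix n n 𝕜} (hR : IsUnit R.det)
    (x : EuclideanSpace 𝕜 n) :
    ‖x‖ ≤ ‖R⁻¹‖ * ‖(EuclideanSpace.equiv n 𝕜).symm (R *ᵥ x)‖ := by
  have hx : x = (EuclideanSpace.equiv n 𝕜).symm
      (R⁻¹ *ᵥ (EuclideanSpace.equiv n 𝕜).symm (R *ᵥ x)) := by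
    simp [mulVec_mulVec, nonsing_inv_mul R hR]
  calc ‖x‖ = _ := congrArg norm hx
    _ ≤ _ := l2_opNorm_mulVec _ _

lemma IsHermitian.l2_opNorm_eq {M : Matrix n n 𝕜} (hM : M.IsHermitian) :
    ‖M‖ = ‖hM.eigenvalues‖ := by
  conv_lhs => rw [hM.spectral_theorem, Unitary.conjStarAlgAut_apply, ← Unitary.coe_star]
  rw [CStarRing.norm_mul_coe_unitary, CStarRing.norm_coe_unitary_mul, l2_opNorm_diagonal]
  simp [Pi.norm_def]

lemma IsHermitian.norm_inv_mul_self {R : Matrix n n 𝕜} (hR : R.IsHermitian) :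
    ‖(R * R)⁻¹‖ = ‖R⁻¹‖ ^ 2 := by
  have hR' : R⁻¹ᴴ = R⁻¹ := by rw [conjTranspose_nonsing_inv, hR.eq]
  nth_rw 1 [mul_inv_rev, ← hR']
  rw [l2_opNorm_conjTranspose_mul_self, sq]

namespace PosSemidef

lemma sqrt_eq_conjStarAlgAut {A : Matrix n n 𝕜} (hA : A.PosSemidef) :
    hA.sqrt = Unitary.conjStarAlgAut 𝕜 _ hA.1.eigenvectorUnitary
      (diagonal (RCLike.ofReal ∘ Real.sqrt ∘ hA.1.eigenvalues)) := by
  rw [Unitary.conjStarAlgAut_apply]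
  rfl

lemma posSemidef_sqrt {A : Matrix n n 𝕜} (hA : A.PosSemidef) : hA.sqrt.PosSemidef := by
  rw [hA.sqrt_eq_conjStarAlgAut, Unitary.conjStarAlgAut_apply]
  exact (PosSemidef.diagonal fun i => by simp [Real.sqrt_nonneg]).mul_mul_conjTranspose_same _

lemma sqrt_mul_self {A : Matrix n n 𝕜} (hA : A.PosSemidef) : hA.sqrt * hA.sqrt = A := by
  conv_rhs => rw [hA.1.spectral_theorem]
  rw [hA.sqrt_eq_conjStarAlgAut, ← map_mul, diagonal_mul_diagonal]
  congr 2
  ext i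
  simp [← RCLike.ofReal_mul, Real.mul_self_sqrt (hA.eigenvalues_nonneg i)]

lemma isUnit_det_sqrt {A : Matrix n n 𝕜} (hA : A.PosSemidef) (hdet : IsUnit A.det) :
    IsUnit hA.sqrt.det := by
  rw [← hA.sqrt_mul_self, det_mul] at hdet
  exact isUnit_of_mul_isUnit_left hdet

lemma norm_inv_sqrt {A : Matrix n n 𝕜} (hA : A.PosSemidef) : ‖hA.sqrt⁻¹‖ = √‖A⁻¹‖ := by
  conv_rhs => rw [← hA.sqrt_mul_self, hA.posSemidef_sqrt.isHermitian.norm_inv_mul_self]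
  exact (Real.sqrt_sq (norm_nonneg _)).symm

lemma norm_sq_le_norm_inv_mul_re_dotProduct {Q : Matrix n n 𝕜} (hQ : Q.PosSemidef)
    (hdet : IsUnit Q.det) (x : EuclideanSpace 𝕜 n) :
    ‖x‖ ^ 2 ≤ ‖Q⁻¹‖ * RCLike.re (star ⇑x ⬝ᵥ (Q *ᵥ ⇑x)) := by
  set R := hQ.sqrt
  have hR : R.IsHermitian := hQ.posSemidef_sqrt.isHermitian
  have hQR : Q = Rᴴ * R := by rw [hR.eq, hQ.sqrt_mul_self]
  rw [hQR, star_dotProduct_conjTranspose_mul_self_mulVec, ← RCLike.ofReal_pow,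
    RCLike.ofReal_re, hR.eq, hR.norm_inv_mul_self, ← mul_pow]
  gcongr
  exact norm_le_norm_inv_mul_norm_mulVec (hQ.isUnit_det_sqrt hdet) x

end PosSemidef

lemma abs_mul_re_dotProduct_le_norm_mul_self_sub {P Q : Matrix n n 𝕜} (hP : P.PosSemidef)
    (hQ : Q.PosSemidef) {μ : ℝ} {v : EuclideanSpace 𝕜 n} (hv : ‖v‖ = 1)
    (hPQ : (P - Q) *ᵥ ⇑v = μ • ⇑v) :
    |μ| * RCLike.re (star ⇑v ⬝ᵥ (Q *ᵥ ⇑v)) ≤ ‖P * P - Q * Q‖ := by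
  set p := RCLike.re (star ⇑v ⬝ᵥ (P *ᵥ ⇑v))
  set q := RCLike.re (star ⇑v ⬝ᵥ (Q *ᵥ ⇑v))
  have hp : 0 ≤ p := hP.re_dotProduct_nonneg v
  have hq : 0 ≤ q := hQ.re_dotProduct_nonneg v
  have hS : (P - Q).IsHermitian := hP.isHermitian.sub hQ.isHermitian
  have hsplit : P * P - Q * Q = P * (P - Q) + (P - Q) * Q := by noncomm_ring
  have hquad : RCLike.re (star ⇑v ⬝ᵥ ((P * P - Q * Q) *ᵥ ⇑v)) = μ * (p + q) := by
    rw [hsplit, add_mulVec, dotProduct_add, ← mulVec_mulVec, ← mulVec_mulVec, hPQ,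
      dotProduct_mulVec (star _) (P - Q), ← hS.eq, ← star_mulVec, hPQ]
    simp [p, q, mul_add, mulVec_smul, RCLike.smul_re]
  calc |μ| * q ≤ |μ| * (p + q) := by gcongr; linarith
    _ = |RCLike.re (star ⇑v ⬝ᵥ ((P * P - Q * Q) *ᵥ ⇑v))| := by
        rw [hquad, abs_mul, abs_of_nonneg (add_nonneg hp hq)]
    _ ≤ ‖P * P - Q * Q‖ * ‖v‖ ^ 2 :=
        (RCLike.abs_re_le_norm _).trans (norm_star_dotProduct_mulVec_le _ _)
    _ = ‖P * P - Q * Q‖ := by rw [hv, one_pow, mul_one]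

theorem PosSemidef.norm_sqrt_sub_sqrt_le {A B : Matrix n n 𝕜} (hA : A.PosSemidef)
    (hB : B.PosDef) : ‖hA.sqrt - hB.posSemidef.sqrt‖ ≤ ‖A - B‖ * √‖B⁻¹‖ := by
  set P := hA.sqrt
  set Q := hB.posSemidef.sqrt
  have hP : P.PosSemidef := hA.posSemidef_sqrt
  have hQ : Q.PosSemidef := hB.posSemidef.posSemidef_sqrt
  have hS : (P - Q).IsHermitian := hP.isHermitian.sub hQ.isHermitian
  rw [hS.l2_opNorm_eq, ← hB.posSemidef.norm_inv_sqrt]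
  refine (pi_norm_le_iff_of_nonneg (by positivity)).2 fun i => ?_
  set μ := hS.eigenvalues i
  set v := hS.eigenvectorBasis i
  set q := RCLike.re (star ⇑v ⬝ᵥ (Q *ᵥ ⇑v))
  have hv : ‖v‖ = 1 := hS.eigenvectorBasis.orthonormal.1 i
  have hlower : 1 ≤ ‖Q⁻¹‖ * q := by
    simpa [hv] using hQ.norm_sq_le_norm_inv_mul_re_dotProduct
      (hB.posSemidef.isUnit_det_sqrt (B.isUnit_iff_isUnit_det.1 hB.isUnit)) v
  have hupper : |μ| * q ≤ ‖A - B‖ := by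
    simpa only [P, Q, hA.sqrt_mul_self, hB.posSemidef.sqrt_mul_self] using
      abs_mul_re_dotProduct_le_norm_mul_self_sub hP hQ hv (hS.mulVec_eigenvectorBasis i)
  calc ‖μ‖ = |μ| := Real.norm_eq_abs μ
    _ ≤ |μ| * (‖Q⁻¹‖ * q) := le_mul_of_one_le_right (abs_nonneg _) hlower
    _ = |μ| * q * ‖Q⁻¹‖ := by ring
    _ ≤ ‖A - B‖ * ‖Q⁻¹‖ := by gcongr

end Matrix

/-- for PSD `A` and PD `B`, `‖A^{1/2} − B^{1/2}‖ ≤ ‖A − B‖·‖B⁻¹‖^{1/2}`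
in operator norm. -/
theorem stmt_1 {k : ℕ} (A B : Matrix (Fin k) (Fin k) ℝ)
    (hA : A.PosSemidef) (hB : B.PosDef) :
    ‖hA.sqrt - hB.posSemidef.sqrt‖ ≤ ‖A - B‖ * Real.sqrt ‖B⁻¹‖ :=
  hA.norm_sqrt_sub_sqrt_le hB
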